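/- For every hypergraph H = (V, E) of rank r and every positive integer k, there exists a subset E' ⊆ E that contains every k-weak edge of H (every edge e with γ_H(e) < k) and is 4rk-light, i.e., |E'| ≤ 4rk·(κ(H − E') − κ(H)). -/

import Mathlib

/- A hypergraph on a finite vertex type `V` is given by a multiset `E` of edges,
each edge a `Finset V` (with at least 2 vertices, stated as a hypothesis). -/

variable {V : Type*} [Fintype V] [DecidableEq V]

/-- `δ_H(A)`: the (multiset of) edges of `E` crossing the cut `A`. -/
def cutEdges (E : Multiset (Finset V)) (A : Finset V) : Multiset (Finset V) :=
  E.filter (fun e => (e ∩ A).Nonempty ∧ (e \ A).Nonempty)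

/-- Edge multiset of the subhypergraph `H[U]` induced on `U`. -/
def induced (E : Multiset (Finset V)) (U : Finset V) : Multiset (Finset V) :=
  E.filter (fun e => e ⊆ U)

/-- Edge-connectivity `λ(H[U])`: the minimum number of edges of `H[U]` crossing a
nonempty proper subset `A ⊊ U`. -/
noncomputable def lam (E : Multiset (Finset V)) (U : Finset V) : ℕ :=
  sInf {k : ℕ | ∃ A : Finset V, A ⊆ U ∧ A.Nonempty ∧ A ≠ U ∧
    k = Multiset.card (cutEdges (induced E U) A)}

/-- Strength `γ_H(e)`: the maximum of `λ(H[U])` over all `U` with `e ⊆ U ⊆ V`. -/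
noncomputable def strength (E : Multiset (Finset V)) (e : Finset V) : ℕ :=
  (Finset.univ.powerset.filter (fun U => e ⊆ U)).sup (lam E)

/-- The graph on `V` joining two distinct vertices that lie in a common edge of `E`;
its connectivity notions are those of the hypergraph. -/
def toGraph (E : Multiset (Finset V)) : SimpleGraph V where
  Adj u v := u ≠ v ∧ ∃ e ∈ E, u ∈ e ∧ v ∈ e
  symm := ⟨by rintro u v ⟨h, e, he, hu, hv⟩; exact ⟨h.symm, e, he, hv, hu⟩⟩
  loopless := ⟨by rintro v ⟨h, -⟩; exact h rfl⟩

/-- `κ(H)`: the number of connected components of the hypergraph. -/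
noncomputable def kappa (E : Multiset (Finset V)) : ℕ :=
  Nat.card (toGraph E).ConnectedComponent

/-- The vertex map contracting the edge `e'` to its representative vertex `v0 ∈ e'`. -/
def contractMap (e' : Finset V) (v0 : V) : V → V := fun u => if u ∈ e' then v0 else u

/-- The hypergraph `H/e'` obtained by contracting the edge `e'` (to the representative
vertex `v0 ∈ e'`): edges contained in `e'` are removed, all other edges are replaced by
their image under the contraction. -/
def contract (E : Multiset (Finset V)) (e' : Finset V) (v0 : V) : Multiset (Finset V) :=
  (E.filter (fun f => ¬ f ⊆ e')).map (fun f => f.image (contractMap e' v0))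

/-- The degree of a vertex: the number of edges (with multiplicity) containing it. -/
def degree (E : Multiset (Finset V)) (v : V) : ℕ :=
  Multiset.card (E.filter (fun e => v ∈ e))

/-!
If some edge `e` is `k`-weak, the connected component `U` of `e` has `λ(H[U]) ≤ γ(e) < k`, so a
minimum cut of `H[U]` consists of fewer than `k` edges; since `U` is a component, no other edge
of `H` crosses that cut, and deleting its edges splits `U`. Strength only drops when edges are
deleted, so the edges that were `k`-weak stay `k`-weak and we can recurse. The union of the
removed cuts contains every `k`-weak edge and is even `k`-light, since every cut costs fewer than
`k` edges and creates at least one new component; and `k ≤ 4rk` as soon as there is an edge.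
-/

open SimpleGraph

def IsLight (ℓ : ℕ) (E E' : Multiset (Finset V)) : Prop :=
  Multiset.card E' ≤ ℓ * (kappa (E - E') - kappa E)

omit [Fintype V] in
lemma lam_le_card_cutEdges (E : Multiset (Finset V)) {U A : Finset V} (hAU : A ⊆ U)
    (hA : A.Nonempty) (hAne : A ≠ U) : lam E U ≤ Multiset.card (cutEdges (induced E U) A) :=
  Nat.sInf_le ⟨A, hAU, hA, hAne, rfl⟩

omit [Fintype V] in
lemma exists_cut_card_eq_lam (E : Multiset (Finset V)) {U : Finset V} (hU : 1 < U.card) :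
    ∃ A ⊆ U, A.Nonempty ∧ A ≠ U ∧ Multiset.card (cutEdges (induced E U) A) = lam E U := by
  obtain ⟨x, hx, y, hy, hxy⟩ := Finset.one_lt_card.mp hU
  have hne : {m : ℕ | ∃ A : Finset V, A ⊆ U ∧ A.Nonempty ∧ A ≠ U ∧
      m = Multiset.card (cutEdges (induced E U) A)}.Nonempty := by
    refine ⟨_, {x}, Finset.singleton_subset_iff.mpr hx, Finset.singleton_nonempty x, ?_, rfl⟩
    rintro rfl
    exact hxy (Finset.mem_singleton.mp hy).symm
  obtain ⟨A, hAU, hA, hAne, hcard⟩ := Nat.sInf_mem hne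
  exact ⟨A, hAU, hA, hAne, hcard.symm⟩

omit [Fintype V] in
lemma lam_eq_zero_of_card_le_one (E : Multiset (Finset V)) {U : Finset V} (hU : U.card ≤ 1) :
    lam E U = 0 := by
  refine Nat.sInf_eq_zero.mpr (Or.inr (Set.eq_empty_of_forall_notMem ?_))
  rintro _ ⟨A, hAU, hA, hAne, -⟩
  exact hAne (Finset.eq_of_subset_of_card_le hAU (hU.trans (Finset.one_le_card.mpr hA)))

omit [Fintype V] in
lemma lam_mono {E' E : Multiset (Finset V)} (h : E' ≤ E) (U : Finset V) :
    lam E' U ≤ lam E U := by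
  rcases le_or_gt U.card 1 with hU | hU
  · rw [lam_eq_zero_of_card_le_one E' hU]
    exact Nat.zero_le _
  · obtain ⟨A, hAU, hA, hAne, hcard⟩ := exists_cut_card_eq_lam E hU
    calc lam E' U ≤ Multiset.card (cutEdges (induced E' U) A) :=
          lam_le_card_cutEdges E' hAU hA hAne
      _ ≤ Multiset.card (cutEdges (induced E U) A) :=
          Multiset.card_le_card (Multiset.filter_le_filter _ (Multiset.filter_le_filter _ h))
      _ = lam E U := hcard

lemma strength_mono {E' E : Multiset (Finset V)} (h : E' ≤ E) (e : Finset V) :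
    strength E' e ≤ strength E e :=
  Finset.sup_mono_fun fun U _ => lam_mono h U

lemma lam_le_strength (E : Multiset (Finset V)) {e U : Finset V} (he : e ⊆ U) :
    lam E U ≤ strength E e :=
  Finset.le_sup (Finset.mem_filter.mpr ⟨Finset.mem_powerset.mpr (Finset.subset_univ U), he⟩)

omit [Fintype V] [DecidableEq V] in
lemma toGraph_mono {E' E : Multiset (Finset V)} (h : E' ≤ E) : toGraph E' ≤ toGraph E := by
  rintro u v ⟨huv, e, he, hu, hv⟩
  exact ⟨huv, e, Multiset.mem_of_le h he, hu, hv⟩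

omit [Fintype V] [DecidableEq V] in
lemma toGraph_reachable_of_mem {E : Multiset (Finset V)} {e : Finset V} (he : e ∈ E) {u v : V}
    (hu : u ∈ e) (hv : v ∈ e) : (toGraph E).Reachable u v := by
  obtain rfl | huv := eq_or_ne u v
  · rfl
  · exact Adj.reachable ⟨huv, e, he, hu, hv⟩

omit [DecidableEq V] in
lemma kappa_le_kappa_of_le {E' E : Multiset (Finset V)} (h : E' ≤ E) : kappa E ≤ kappa E' :=
  ConnectedComponent.card_le_card_of_le (toGraph_mono h)

omit [DecidableEq V] in
lemma kappa_lt_kappa_of_le {E' E : Multiset (Finset V)} (h : E' ≤ E) {a b : V}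
    (hab : (toGraph E).Reachable a b) (hab' : ¬ (toGraph E').Reachable a b) :
    kappa E < kappa E' := by
  classical
  let f := ConnectedComponent.map (Hom.ofLE (toGraph_mono h))
  have hf_not_inj : ¬ Function.Injective f := fun hinj =>
    hab' (ConnectedComponent.eq.mp (hinj (ConnectedComponent.sound hab)))
  simpa only [kappa, Nat.card_eq_fintype_card] using
    Fintype.card_lt_of_surjective_not_injective f
      (ConnectedComponent.surjective_map_ofLE _) hf_not_inj

omit [Fintype V] in
lemma not_reachable_sub_cutEdges (E : Multiset (Finset V)) {A : Finset V} {a b : V}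
    (ha : a ∈ A) (hb : b ∉ A) : ¬ (toGraph (E - cutEdges E A)).Reachable a b := by
  rintro ⟨p⟩
  obtain ⟨d, -, hdA, hdA'⟩ := p.exists_boundary_dart (A : Set V) ha hb
  obtain ⟨-, f, hf, hf₁, hf₂⟩ := d.adj
  have hf_crosses : (f ∩ A).Nonempty ∧ (f \ A).Nonempty :=
    ⟨⟨_, Finset.mem_inter.mpr ⟨hf₁, hdA⟩⟩, ⟨_, Finset.mem_sdiff.mpr ⟨hf₂, hdA'⟩⟩⟩
  have hf_count := Multiset.count_pos.mpr hf
  rw [Multiset.count_sub, cutEdges, Multiset.count_filter, if_pos hf_crosses] at hf_count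
  omega

omit [Fintype V] in
lemma cutEdges_induced_of_closed {E : Multiset (Finset V)} {U A : Finset V}
    (hU : ∀ f ∈ E, ∀ x ∈ f, x ∈ U → f ⊆ U) (hAU : A ⊆ U) :
    cutEdges (induced E U) A = cutEdges E A := by
  rw [cutEdges, cutEdges, induced, Multiset.filter_filter]
  refine Multiset.filter_congr fun f hf => ⟨And.left, fun hcross => ⟨hcross, ?_⟩⟩
  obtain ⟨x, hx⟩ := hcross.1
  rw [Finset.mem_inter] at hx
  exact hU f hf x hx.1 (hAU hx.2)

/-- The cut is a minimum cut of the component of `e`; as that component is closed under edges,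
its cut in the induced hypergraph is its cut in `E`. -/
lemma exists_small_separating_cut {E : Multiset (Finset V)} {e : Finset V} (he : e ∈ E)
    (he2 : 2 ≤ e.card) {k : ℕ} (hek : strength E e < k) :
    ∃ A : Finset V, Multiset.card (cutEdges E A) < k ∧
      ∃ a ∈ A, ∃ b ∉ A, (toGraph E).Reachable a b := by
  classical
  obtain ⟨v, hv⟩ : e.Nonempty := Finset.card_pos.mp (by omega)
  set U := Finset.univ.filter ((toGraph E).Reachable v)
  have hmemU : ∀ {u}, u ∈ U ↔ (toGraph E).Reachable v u := by simp [U]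
  have heU : e ⊆ U := fun u hu => hmemU.mpr (toGraph_reachable_of_mem he hv hu)
  have hU_closed : ∀ f ∈ E, ∀ x ∈ f, x ∈ U → f ⊆ U := fun f hf x hx hxU y hy =>
    hmemU.mpr ((hmemU.mp hxU).trans (toGraph_reachable_of_mem hf hx hy))
  obtain ⟨A, hAU, ⟨a, ha⟩, hAne, hcard⟩ :=
    exists_cut_card_eq_lam E (he2.trans (Finset.card_le_card heU))
  obtain ⟨b, hbU, hbA⟩ :=
    Finset.exists_of_ssubset (Finset.ssubset_iff_subset_ne.mpr ⟨hAU, hAne⟩)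
  refine ⟨A, ?_, a, ha, b, hbA, (hmemU.mp (hAU ha)).symm.trans (hmemU.mp hbU)⟩
  rw [← cutEdges_induced_of_closed hU_closed hAU, hcard]
  exact (lam_le_strength E heU).trans_lt hek

lemma IsLight.add {ℓ : ℕ} {E D E' : Multiset (Finset V)} (hD : IsLight ℓ E D)
    (hE' : IsLight ℓ (E - D) E') : IsLight ℓ E (D + E') := by
  have hκD := kappa_le_kappa_of_le (tsub_le_self : E - D ≤ E)
  have hκE' := kappa_le_kappa_of_le (tsub_le_self : E - D - E' ≤ E - D)
  unfold IsLight at *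
  calc Multiset.card (D + E')
      ≤ ℓ * (kappa (E - D) - kappa E) + ℓ * (kappa (E - D - E') - kappa (E - D)) := by
        rw [Multiset.card_add]; exact add_le_add hD hE'
    _ = ℓ * (kappa (E - (D + E')) - kappa E) := by
        rw [← mul_add, tsub_add_eq_tsub_tsub]; congr 1; omega

def ContainsWeakEdges (k : ℕ) (E E' : Multiset (Finset V)) : Prop :=
  ∀ e ∈ E, strength E e < k → E.count e ≤ E'.count e

lemma ContainsWeakEdges.add {k : ℕ} {E D E' : Multiset (Finset V)} (hDE : D ≤ E)
    (hE' : ContainsWeakEdges k (E - D) E') : ContainsWeakEdges k E (D + E') := by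
  intro f _ hfk
  have hcount : (E - D).count f ≤ E'.count f := by
    by_cases hf : f ∈ E - D
    · exact hE' f hf ((strength_mono tsub_le_self f).trans_lt hfk)
    · simp [Multiset.count_eq_zero.mpr hf]
  calc E.count f = D.count f + (E - D).count f := by
        rw [← Multiset.count_add, add_tsub_cancel_of_le hDE]
    _ ≤ (D + E').count f := by rw [Multiset.count_add]; omega

theorem exists_isLight_containsWeakEdges (E : Multiset (Finset V))
    (hE : ∀ e ∈ E, 2 ≤ e.card) (k : ℕ) :
    ∃ E' ≤ E, ContainsWeakEdges k E E' ∧ IsLight k E E' := by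
  by_cases hweak : ∃ e ∈ E, strength E e < k
  swap
  · push Not at hweak
    exact ⟨0, Multiset.zero_le E, fun e he hek => absurd hek (hweak e he).not_gt,
      by simp [IsLight]⟩
  obtain ⟨e, he, hek⟩ := hweak
  obtain ⟨A, hcard, a, ha, b, hb, hab⟩ := exists_small_separating_cut he (hE e he) hek
  set D := cutEdges E A
  have hDE : D ≤ E := Multiset.filter_le _ _
  have hsplit : kappa E < kappa (E - D) :=
    kappa_lt_kappa_of_le tsub_le_self hab (not_reachable_sub_cutEdges E ha hb)
  have hD_light : IsLight k E D := hcard.le.trans (Nat.le_mul_of_pos_right k (by omega))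
  have hD_pos : 0 < Multiset.card D := Multiset.card_pos.mpr fun hD => by simp [hD] at hsplit
  have hcard_lt : Multiset.card (E - D) < Multiset.card E := by
    rw [Multiset.card_sub hDE]
    have := Multiset.card_le_card hDE
    omega
  obtain ⟨E', hE'le, hE'weak, hE'light⟩ := exists_isLight_containsWeakEdges (E - D)
    (fun f hf => hE f (Multiset.mem_of_le tsub_le_self hf)) k
  exact ⟨D + E', (add_le_add_right hE'le D).trans (add_tsub_cancel_of_le hDE).le,
    hE'weak.add hDE, hD_light.add hE'light⟩
termination_by Multiset.card E

theorem light_weak_edge_set_exists_general (E : Multiset (Finset V))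
    (hE : ∀ e ∈ E, 2 ≤ e.card) (r : ℕ) (hr : ∀ e ∈ E, e.card ≤ r)
    (k : ℕ) :
    ∃ E' : Multiset (Finset V), E' ≤ E ∧
      (∀ e : Finset V, e ∈ E → strength E e < k → E.count e ≤ E'.count e) ∧
      Multiset.card E' ≤ 4 * r * k * (kappa (E - E') - kappa E) := by
  obtain ⟨E', hE'E, hweak, hlight⟩ := exists_isLight_containsWeakEdges E hE k
  refine ⟨E', hE'E, hweak, ?_⟩
  rcases Multiset.empty_or_exists_mem E' with rfl | ⟨e, he⟩
  · simp
  · have heE := Multiset.mem_of_le hE'E he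
    have hr2 : 2 ≤ r := (hE e heE).trans (hr e heE)
    exact hlight.trans (Nat.mul_le_mul_right _ (by nlinarith))

/-- every rank-`r` hypergraph has a `4rk`-light set `E' ⊆ E` containing
(all copies of) every `k`-weak edge: `|E'| ≤ 4rk·(κ(H − E') − κ(H))`. -/
theorem light_weak_edge_set_exists (E : Multiset (Finset V))
    (hE : ∀ e ∈ E, 2 ≤ e.card) (r : ℕ) (hr : ∀ e ∈ E, e.card ≤ r)
    (k : ℕ) (hk : 0 < k) :
    ∃ E' : Multiset (Finset V), E' ≤ E ∧
      (∀ e : Finset V, e ∈ E → strength E e < k → E.count e ≤ E'.count e) ∧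
      Multiset.card E' ≤ 4 * r * k * (kappa (E - E') - kappa E) :=
  light_weak_edge_set_exists_general E hE r hr k
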